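/- Let g : ℝ → ℝ be the hat function g(x) = 2·max(x,0) − 4·max(x−1/2,0) + 2·max(x−1,0) and let g_s be its s-fold composition. Then for every s ∈ ℕ, k ∈ {0,…,2^{s−1}−1}, and x ∈ [0, 2^{−(s−1)}], it holds that g_s(k·2^{−(s−1)} + x) = g_s((k+1)·2^{−(s−1)} − x). -/

import Mathlib

/-- The "hat function" `g(x) = 2·max(x,0) − 4·max(x−1/2,0) + 2·max(x−1,0)`. -/
noncomputable def hatg (x : ℝ) : ℝ :=
  2 * max x 0 - 4 * max (x - 1/2) 0 + 2 * max (x - 1) 0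

/-!
Since `g(1 - x) = g(x)`, every iterate `g_{n+1}` is symmetric about `1/2`, and on `[0, 1/2]`
`g` is `x ↦ 2x`, so `g_{n+1}(y) = g_n(2y)` there. By induction on `n`: a dyadic interval of
length `2^{-n}` in `[0, 1/2]` is doubled onto one of length `2^{-(n-1)}`, on which `g_n` is
symmetric; an interval in `[1/2, 1]` is the mirror image of one in `[0, 1/2]`.
-/

lemma hatg_one_sub (x : ℝ) : hatg (1 - x) = hatg x := by
  have h (a : ℝ) : max a 0 - max (-a) 0 = a := posPart_sub_negPart a
  have h₁ := h (x - 1)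
  have h₂ := h (x - 1/2)
  have h₃ := h x
  simp only [hatg]
  ring_nf at *
  linarith

lemma hatg_of_le_half {y : ℝ} (h₀ : 0 ≤ y) (h₁ : y ≤ 1/2) : hatg y = 2 * y := by
  rw [hatg, max_eq_left h₀, max_eq_right (by linarith), max_eq_right (by linarith)]
  ring

lemma iterate_hatg_succ_one_sub (n : ℕ) (y : ℝ) : hatg^[n + 1] (1 - y) = hatg^[n + 1] y := by
  rw [Function.iterate_succ_apply, Function.iterate_succ_apply, hatg_one_sub]

lemma iterate_hatg_succ_of_le_half (n : ℕ) {y : ℝ} (h₀ : 0 ≤ y) (h₁ : y ≤ 1/2) :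
    hatg^[n + 1] y = hatg^[n] (2 * y) := by
  rw [Function.iterate_succ_apply, hatg_of_le_half h₀ h₁]

lemma iterate_hatg_succ_dyadic_of_lt (m n k : ℕ) (hk : k < 2 ^ n) {t : ℝ} (ht₀ : 0 ≤ t)
    (ht₁ : t ≤ 1) : hatg^[m + 1] ((k + t) / 2 ^ (n + 1)) = hatg^[m] ((k + t) / 2 ^ n) := by
  have hk' : (k : ℝ) + 1 ≤ 2 ^ n := by exact_mod_cast hk
  rw [iterate_hatg_succ_of_le_half m (by positivity)]
  · rw [pow_succ, div_mul_eq_div_div, mul_div_cancel₀ _ two_ne_zero]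
  · rw [pow_succ, div_le_iff₀ (by positivity)]
    linarith

theorem iterate_hatg_dyadic_symm (n k : ℕ) (hk : k < 2 ^ n) {t : ℝ} (ht₀ : 0 ≤ t)
    (ht₁ : t ≤ 1) :
    hatg^[n + 1] ((k + t) / 2 ^ n) = hatg^[n + 1] ((k + (1 - t)) / 2 ^ n) := by
  induction n generalizing k t with
  | zero =>
    obtain rfl : k = 0 := by simpa using hk
    simpa using (iterate_hatg_succ_one_sub 0 t).symm
  | succ n ih =>
    have left (j : ℕ) (hj : j < 2 ^ n) {u : ℝ} (hu₀ : 0 ≤ u) (hu₁ : u ≤ 1) :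
        hatg^[n + 2] ((j + u) / 2 ^ (n + 1)) = hatg^[n + 2] ((j + (1 - u)) / 2 ^ (n + 1)) := by
      rw [iterate_hatg_succ_dyadic_of_lt (n + 1) n j hj hu₀ hu₁,
        iterate_hatg_succ_dyadic_of_lt (n + 1) n j hj (by linarith) (by linarith)]
      exact ih j hj hu₀ hu₁
    rcases lt_or_ge k (2 ^ n) with hkn | hkn
    · exact left k hkn ht₀ ht₁
    · obtain ⟨j, hj, rfl⟩ : ∃ j < 2 ^ n, k = 2 ^ (n + 1) - 1 - j :=
        ⟨2 ^ (n + 1) - 1 - k, by omega, by omega⟩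
      have hjk : ((2 ^ (n + 1) - 1 - j : ℕ) : ℝ) = 2 ^ (n + 1) - 1 - j := by
        rw [Nat.cast_sub (by omega), Nat.cast_sub Nat.one_le_two_pow]
        push_cast; ring
      have reflect (v : ℝ) :
          ((2 ^ (n + 1) - 1 - j : ℕ) + v) / 2 ^ (n + 1) = 1 - (j + (1 - v)) / 2 ^ (n + 1) := by
        rw [hjk]; field_simp; ring
      rw [reflect, reflect, iterate_hatg_succ_one_sub, iterate_hatg_succ_one_sub, sub_sub_cancel]
      exact (left j hj ht₀ ht₁).symm

/-- Reflection symmetry of the sawtooth function: for `s ≥ 1`, `k < 2^{s−1}` and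
`x ∈ [0, 2^{−(s−1)}]`, `g_s(k·2^{−(s−1)} + x) = g_s((k+1)·2^{−(s−1)} − x)`. -/
theorem stmt1 (s : ℕ) (hs : 1 ≤ s) (k : ℕ) (hk : k < 2 ^ (s - 1)) (x : ℝ)
    (hx : x ∈ Set.Icc (0:ℝ) (((2:ℝ) ^ (s - 1))⁻¹)) :
    hatg^[s] ((k : ℝ) * ((2:ℝ) ^ (s - 1))⁻¹ + x)
      = hatg^[s] (((k : ℝ) + 1) * ((2:ℝ) ^ (s - 1))⁻¹ - x) := by
  obtain ⟨n, rfl⟩ : ∃ n, s = n + 1 := ⟨s - 1, by omega⟩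
  rw [Nat.add_sub_cancel] at hk hx ⊢
  have h2n : (0 : ℝ) < 2 ^ n := by positivity
  have ht₀ : 0 ≤ x * 2 ^ n := mul_nonneg hx.1 h2n.le
  have ht₁ : x * 2 ^ n ≤ 1 := by rw [← le_div_iff₀ h2n, one_div]; exact hx.2
  convert iterate_hatg_dyadic_symm n k hk ht₀ ht₁ using 2
  · field_simp
  · field_simp; ring
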